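/- On a paracontact metric manifold the canonical paracontact connection ∇̃ satisfies: ∇̃η = 0, ∇̃ξ = 0, ∇̃g = 0; (∇̃_X φ)Y = (∇_X φ)Y + g(X − hX, Y)ξ − η(Y)(X − hX); its torsion T satisfies T(ξ, φY) = −φT(ξ, Y) for all Y, and T(X,Y) = 2dη(X,Y)ξ for X, Y in the distribution D = ker η. -/
import Mathlib


/-!
An abstract formalization of (almost) paracontact metric geometry.

We axiomatize the algebra `C` of smooth functions (a commutative `ℝ`-algebra),
the `C`-module `V` of vector fields together with the derivation action of
vector fields on functions and the Lie bracket, a pseudo-Riemannian metric `g`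
with its Levi-Civita connection `nabla` (characterized by being torsion-free
and metric), and the almost paracontact structure tensors `(φ, ξ, η)`.
Traces (Ricci and scalar curvatures, square norms of tensors) are computed with
respect to a `φ`-basis `(eᵢ, φ eᵢ, ξ)`, `i = 1, …, n`, adapted to the signature
`(n+1, n)`.
-/

noncomputable section

/-- Abstract calculus of vector fields: an `ℝ`-algebra `C` of "smooth functions",
a `C`-module `V` of "vector fields", the derivation action `act` of vector fields
on functions, and the Lie bracket. -/
structure VectorFieldCalculus (C V : Type*) [CommRing C] [Algebra ℝ C]
    [AddCommGroup V] [Module C V] [Module ℝ V] [IsScalarTower ℝ C V] where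
  act : V → C → C
  act_add_left : ∀ X Y f, act (X + Y) f = act X f + act Y f
  act_smul_left : ∀ (f : C) (X : V) (u : C), act (f • X) u = f * act X u
  act_add_right : ∀ X f g, act X (f + g) = act X f + act X g
  act_mul : ∀ X f g, act X (f * g) = f * act X g + g * act X f
  act_algebraMap : ∀ X (r : ℝ), act X (algebraMap ℝ C r) = 0
  bracket : V → V → V
  bracket_antisymm : ∀ X Y, bracket X Y = - bracket Y X
  bracket_add_left : ∀ X Y Z, bracket (X + Y) Z = bracket X Z + bracket Y Z
  bracket_act : ∀ X Y f, act (bracket X Y) f = act X (act Y f) - act Y (act X f)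
  bracket_smul_right : ∀ X (f : C) Y, bracket X (f • Y) = act X f • Y + f • bracket X Y
  jacobi : ∀ X Y Z,
    bracket X (bracket Y Z) + bracket Y (bracket Z X) + bracket Z (bracket X Y) = 0

/-- An almost paracontact structure `(φ, ξ, η)`: `φ ξ = 0`, `η ∘ φ = 0`,
`η(ξ) = 1` and `φ² = id − η ⊗ ξ`. -/
structure AlmostParacontact (C V : Type*) [CommRing C] [Algebra ℝ C]
    [AddCommGroup V] [Module C V] [Module ℝ V] [IsScalarTower ℝ C V]
    extends VectorFieldCalculus C V where
  phi : V → V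
  phi_add : ∀ X Y, phi (X + Y) = phi X + phi Y
  phi_smul : ∀ (f : C) X, phi (f • X) = f • phi X
  xi : V
  eta : V → C
  eta_add : ∀ X Y, eta (X + Y) = eta X + eta Y
  eta_smul : ∀ (f : C) X, eta (f • X) = f * eta X
  phi_xi : phi xi = 0
  eta_phi : ∀ X, eta (phi X) = 0
  eta_xi : eta xi = 1
  phi_phi : ∀ X, phi (phi X) = X - eta X • xi

namespace AlmostParacontact

variable {C V : Type*} [CommRing C] [Algebra ℝ C]
  [AddCommGroup V] [Module C V] [Module ℝ V] [IsScalarTower ℝ C V]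
  (P : AlmostParacontact C V)

/-- `2 dη(X,Y) = X(η Y) − Y(η X) − η [X,Y]`. -/
def twoDEta (X Y : V) : C :=
  P.act X (P.eta Y) - P.act Y (P.eta X) - P.eta (P.bracket X Y)

/-- `dη(X,Y) = ½ (X(η Y) − Y(η X) − η [X,Y])`. -/
def dEta (X Y : V) : C := (2⁻¹ : ℝ) • P.twoDEta X Y

/-- The Nijenhuis tensor of `φ`. -/
def Nphi (X Y : V) : V :=
  P.bracket (P.phi X) (P.phi Y) - P.phi (P.bracket (P.phi X) Y)
    - P.phi (P.bracket X (P.phi Y)) + P.bracket X Y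

/-- `N⁽¹⁾(X,Y) = N_φ(X,Y) − 2 dη(X,Y) ξ`. -/
def N1 (X Y : V) : V := P.Nphi X Y - P.twoDEta X Y • P.xi

/-- `(L_X η)(Y)`. -/
def lieEta (X Y : V) : C := P.act X (P.eta Y) - P.eta (P.bracket X Y)

/-- `N⁽²⁾(X,Y) = (L_{φX} η)Y − (L_{φY} η)X`. -/
def N2 (X Y : V) : C := P.lieEta (P.phi X) Y - P.lieEta (P.phi Y) X

/-- `N⁽³⁾(X) = (L_ξ φ)X`. -/
def N3 (X : V) : V := P.bracket P.xi (P.phi X) - P.phi (P.bracket P.xi X)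

/-- `N⁽⁴⁾(X) = (L_ξ η)X`. -/
def N4 (X : V) : C := P.lieEta P.xi X

/-- Integrability of the paracomplex structure `φ` on `D = ker η`:
`N_φ(X,Y) = 0` and `[φX, Y] + [X, φY] ∈ D` for `X, Y ∈ D`. -/
def IsIntegrable : Prop :=
  (∀ X Y, P.eta X = 0 → P.eta Y = 0 → P.Nphi X Y = 0) ∧
  (∀ X Y, P.eta X = 0 → P.eta Y = 0 →
    P.eta (P.bracket (P.phi X) Y + P.bracket X (P.phi Y)) = 0)

end AlmostParacontact

/-- An almost paracontact metric structure on a `(2n+1)`-dimensional manifold: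
a compatible metric `g` of signature `(n+1, n)` (encoded by a `φ`-basis
`(eᵢ, φ eᵢ, ξ)`), together with its Levi-Civita connection. -/
structure AlmostParacontactMetric (n : ℕ) (C V : Type*) [CommRing C] [Algebra ℝ C]
    [AddCommGroup V] [Module C V] [Module ℝ V] [IsScalarTower ℝ C V]
    extends AlmostParacontact C V where
  g : V → V → C
  g_symm : ∀ X Y, g X Y = g Y X
  g_add_left : ∀ X Y Z, g (X + Y) Z = g X Z + g Y Z
  g_smul_left : ∀ (f : C) X Y, g (f • X) Y = f * g X Y
  g_nondeg : ∀ X, (∀ Y, g X Y = 0) → X = 0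
  compatible : ∀ X Y, g (phi X) (phi Y) = - g X Y + eta X * eta Y
  nabla : V → V → V
  nabla_add_left : ∀ X Y Z, nabla (X + Y) Z = nabla X Z + nabla Y Z
  nabla_smul_left : ∀ (f : C) X Y, nabla (f • X) Y = f • nabla X Y
  nabla_add_right : ∀ X Y Z, nabla X (Y + Z) = nabla X Y + nabla X Z
  nabla_smul_right : ∀ X (f : C) Y, nabla X (f • Y) = act X f • Y + f • nabla X Y
  torsion_free : ∀ X Y, nabla X Y - nabla Y X = bracket X Y
  nabla_metric : ∀ X Y Z, act X (g Y Z) = g (nabla X Y) Z + g Y (nabla X Z)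
  frame : Fin n → V
  frame_orth : ∀ i j, g (frame i) (frame j) = if i = j then 1 else 0
  frame_phi : ∀ i j, g (frame i) (phi (frame j)) = 0
  frame_xi : ∀ i, g (frame i) xi = 0

namespace AlmostParacontactMetric

variable {n : ℕ} {C V : Type*} [CommRing C] [Algebra ℝ C]
  [AddCommGroup V] [Module C V] [Module ℝ V] [IsScalarTower ℝ C V]
  (P : AlmostParacontactMetric n C V)

/-- The fundamental 2-form `F(X,Y) = g(X, φY)`. -/
def F (X Y : V) : C := P.g X (P.phi Y)

/-- The exterior differential of the fundamental 2-form. -/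
def dF (X Y Z : V) : C :=
  P.act X (P.F Y Z) + P.act Y (P.F Z X) + P.act Z (P.F X Y)
    - P.F (P.bracket X Y) Z - P.F (P.bracket Z X) Y - P.F (P.bracket Y Z) X

/-- `(∇_X φ)Y`. -/
def nablaPhi (X Y : V) : V := P.nabla X (P.phi Y) - P.phi (P.nabla X Y)

/-- `h = ½ L_ξ φ`. -/
def h (X : V) : V := (2⁻¹ : ℝ) • P.toAlmostParacontact.N3 X

/-- `ξ` is a Killing vector field: `L_ξ g = 0`. -/
def IsKilling : Prop :=
  ∀ X Y, P.act P.xi (P.g X Y) - P.g (P.bracket P.xi X) Y - P.g X (P.bracket P.xi Y) = 0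

/-- The curvature tensor `R(X,Y)Z = ∇_X ∇_Y Z − ∇_Y ∇_X Z − ∇_{[X,Y]} Z`. -/
def R (X Y Z : V) : V :=
  P.nabla X (P.nabla Y Z) - P.nabla Y (P.nabla X Z) - P.nabla (P.bracket X Y) Z

/-- The (0,4)-curvature tensor `R(X,Y,Z,W) = g(R(X,Y)Z, W)`. -/
def Rm (X Y Z W : V) : C := P.g (P.R X Y Z) W

/-- The signed contraction `∑_a ε_a f(E_a)` over the `φ`-basis
`(eᵢ, φ eᵢ, ξ)` with signs `(+1, −1, +1)`. -/
def ctr (f : V → C) : C :=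
  (∑ i : Fin n, f (P.frame i)) - (∑ i : Fin n, f (P.phi (P.frame i))) + f P.xi

/-- The Ricci tensor. -/
def Ric (X Y : V) : C := P.ctr fun E => P.Rm E X Y E

/-- The scalar curvature. -/
def scal : C := P.ctr fun E => P.Ric E E

/-- The *-Ricci tensor `Ric*_{ij} = g^{ps} R_{pilk} φ^l_j φ^k_s`. -/
def RicStar (X Y : V) : C := P.ctr fun E => P.Rm E X (P.phi Y) (P.phi E)

/-- The *-scalar curvature. -/
def scalStar : C := P.ctr fun E => P.RicStar E E

/-- The square norm `|A|² = ∑ ε_a ε_b g(A E_a, E_b)²` of a (1,1)-tensor. -/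
def normSqOp (A : V → V) : C := P.ctr fun E => P.ctr fun E' => (P.g (A E) E') ^ 2

/-- The tensor `P_{rsi} = ∇_r φ_{si} − η_i g_{rs} + η_s g_{ri}`. -/
def Pten (X Y Z : V) : C :=
  P.g Y (P.nablaPhi X Z) - P.eta Z * P.g X Y + P.eta Y * P.g X Z

/-- The square norm `|P|²`. -/
def normSqP : C := P.ctr fun A => P.ctr fun B => P.ctr fun I => (P.Pten A B I) ^ 2

/-- `|P(X)|² = P_{rsi} P^{rs}_j X^i X^j`. -/
def normSqPX (X : V) : C := P.ctr fun A => P.ctr fun B => (P.Pten A B X) ^ 2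

/-- The square norm `|∇φ|²`. -/
def normSqNablaPhi : C :=
  P.ctr fun A => P.ctr fun B => P.ctr fun I => (P.g B (P.nablaPhi A I)) ^ 2

/-- The paracontact condition `g(X, φY) = dη(X,Y)`. -/
def IsParacontact : Prop := ∀ X Y, P.g X (P.phi Y) = P.toAlmostParacontact.dEta X Y

/-- Normality: `N⁽¹⁾ = 0`. -/
def IsNormal : Prop := ∀ X Y, P.toAlmostParacontact.N1 X Y = 0

/-- The canonical paracontact connection
`∇̃_X Y = ∇_X Y + η(X) φY − η(Y) ∇_X ξ + (∇_X η)(Y) ξ`. -/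
def can (X Y : V) : V :=
  P.nabla X Y + P.eta X • P.phi Y - P.eta Y • P.nabla X P.xi
    + (P.act X (P.eta Y) - P.eta (P.nabla X Y)) • P.xi

/-- The torsion of the canonical paracontact connection. -/
def canTor (X Y : V) : V := P.can X Y - P.can Y X - P.bracket X Y

/-- `D` is a linear connection on `V`. -/
def IsConnection (D : V → V → V) : Prop :=
  (∀ X Y Z, D (X + Y) Z = D X Z + D Y Z) ∧
  (∀ (f : C) X Y, D (f • X) Y = f • D X Y) ∧
  (∀ X Y Z, D X (Y + Z) = D X Y + D X Z) ∧
  (∀ X (f : C) Y, D X (f • Y) = P.act X f • Y + f • D X Y)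

/-- `D` is almost paracontact: `Dg = Dη = Dφ = 0`. -/
def PreservesStructure (D : V → V → V) : Prop :=
  (∀ X Y Z, P.act X (P.g Y Z) = P.g (D X Y) Z + P.g Y (D X Z)) ∧
  (∀ X Y, P.act X (P.eta Y) = P.eta (D X Y)) ∧
  (∀ X Y, D X (P.phi Y) = P.phi (D X Y))

/-- The torsion 3-tensor `T(X,Y,Z) = g(D_X Y − D_Y X − [X,Y], Z)` of a connection. -/
def torsion (D : V → V → V) (X Y Z : V) : C := P.g (D X Y - D Y X - P.bracket X Y) Z

/-- The torsion of `D` is a 3-form (totally skew-symmetric). -/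
def HasSkewTorsion (D : V → V → V) : Prop :=
  ∀ X Y Z, P.torsion D X Y Z = - P.torsion D X Z Y

/-- An almost paracontact linear connection with totally skew-symmetric torsion. -/
def AdmissibleConnection (D : V → V → V) : Prop :=
  P.IsConnection D ∧ P.PreservesStructure D ∧ P.HasSkewTorsion D

/-- The 3-form `T = 2 η ∧ dη + d^φ F − N⁽¹⁾ + η ∧ (ξ ⌟ N⁽¹⁾)`. -/
def Ttor (X Y Z : V) : C :=
  2 * (P.eta X * P.toAlmostParacontact.dEta Y Z
      + P.eta Y * P.toAlmostParacontact.dEta Z X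
      + P.eta Z * P.toAlmostParacontact.dEta X Y)
    - P.dF (P.phi X) (P.phi Y) (P.phi Z)
    - P.g (P.toAlmostParacontact.N1 X Y) Z
    + P.eta X * P.g (P.toAlmostParacontact.N1 P.xi Y) Z
    + P.eta Y * P.g (P.toAlmostParacontact.N1 P.xi Z) X
    + P.eta Z * P.g (P.toAlmostParacontact.N1 P.xi X) Y

/-- The gradient of a function, w.r.t. the `φ`-basis. -/
def grad (f : C) : V :=
  (∑ i : Fin n, P.act (P.frame i) f • P.frame i)
    - (∑ i : Fin n, P.act (P.phi (P.frame i)) f • P.phi (P.frame i))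
    + P.act P.xi f • P.xi

/-- The (hyperbolic) Laplacian `Δ f = ∑ ε_a (E_a(E_a f) − (∇_{E_a} E_a) f)`. -/
def lap (f : C) : C := P.ctr fun E => P.act E (P.act E f) - P.act (P.nabla E E) f

/-- The sub-Laplacian `Δ_D f = Δ f − ξ(ξ f)`. -/
def lapD (f : C) : C := P.lap f - P.act P.xi (P.act P.xi f)

/-- `|df|²`. -/
def normSqdf (f : C) : C := P.ctr fun E => (P.act E f) ^ 2

/-- `|df|²_D = |df|² − (ξ f)²`. -/
def normSqdfD (f : C) : C := P.normSqdf f - (P.act P.xi f) ^ 2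

/-- The scalar curvature of the canonical paracontact connection,
`W₁ = scal − Ric(ξ,ξ) − 4n`. -/
def W1 : C := P.scal - P.Ric P.xi P.xi - ((4 * n : ℕ) : C)

end AlmostParacontactMetric


namespace AlmostParacontactMetric

variable {n : ℕ} {C V : Type*} [CommRing C] [Algebra ℝ C]
  [AddCommGroup V] [Module C V] [Module ℝ V] [IsScalarTower ℝ C V]
  (P : AlmostParacontactMetric n C V)

/-! ### Scalar helpers -/

lemma aux_two_alg : (2 : C) = algebraMap ℝ C 2 := (map_ofNat (algebraMap ℝ C) 2).symm

lemma aux_half_two : ((2⁻¹ : ℝ) • (2 : C)) = 1 := by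
  have h2 : (2 : C) = (2 : ℝ) • (1 : C) := by rw [two_smul]; norm_num
  rw [h2, smul_smul]; norm_num

lemma aux_half_smul (c : C) : (2 : C) * ((2⁻¹ : ℝ) • c) = c := by
  rw [mul_smul_comm, ← smul_mul_assoc, aux_half_two, one_mul]

lemma aux_two_cancel {c d : C} (h : (2 : C) * c = (2 : C) * d) : c = d := by
  calc c = ((2⁻¹ : ℝ) • (2 : C)) * c := by rw [aux_half_two (C := C), one_mul]
    _ = (2⁻¹ : ℝ) • ((2 : C) * c) := by rw [smul_mul_assoc]
    _ = (2⁻¹ : ℝ) • ((2 : C) * d) := by rw [h]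
    _ = ((2⁻¹ : ℝ) • (2 : C)) * d := by rw [smul_mul_assoc]
    _ = d := by rw [aux_half_two (C := C), one_mul]

lemma aux_two_cancel_V {v w : V} (h : (2 : ℝ) • v = (2 : ℝ) • w) : v = w := by
  calc v = ((2⁻¹ : ℝ) * 2) • v := by norm_num
    _ = (2⁻¹ : ℝ) • ((2 : ℝ) • v) := by rw [mul_smul]
    _ = (2⁻¹ : ℝ) • ((2 : ℝ) • w) := by rw [h]
    _ = ((2⁻¹ : ℝ) * 2) • w := by rw [mul_smul]
    _ = w := by norm_num

lemma aux_rsmul (r : ℝ) (v : V) : r • v = (algebraMap ℝ C r) • v :=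
  (algebraMap_smul C r v).symm

/-! ### Linearity helpers -/

lemma aux_eta_zero : P.eta 0 = 0 := map_zero (AddMonoidHom.mk' P.eta P.eta_add)

lemma aux_eta_neg (X : V) : P.eta (-X) = - P.eta X :=
  map_neg (AddMonoidHom.mk' P.eta P.eta_add) X

lemma aux_eta_sub (X Y : V) : P.eta (X - Y) = P.eta X - P.eta Y :=
  map_sub (AddMonoidHom.mk' P.eta P.eta_add) X Y

lemma aux_phi_zero : P.phi 0 = 0 := map_zero (AddMonoidHom.mk' P.phi P.phi_add)

lemma aux_phi_neg (X : V) : P.phi (-X) = - P.phi X :=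
  map_neg (AddMonoidHom.mk' P.phi P.phi_add) X

lemma aux_phi_sub (X Y : V) : P.phi (X - Y) = P.phi X - P.phi Y :=
  map_sub (AddMonoidHom.mk' P.phi P.phi_add) X Y

lemma aux_phi_rsmul (r : ℝ) (X : V) : P.phi (r • X) = r • P.phi X := by
  rw [aux_rsmul (C := C), P.phi_smul, ← aux_rsmul (C := C)]

lemma aux_act_zero (X : V) : P.act X 0 = 0 :=
  map_zero (AddMonoidHom.mk' (P.act X) (P.act_add_right X))

lemma aux_act_neg (X : V) (c : C) : P.act X (-c) = - P.act X c :=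
  map_neg (AddMonoidHom.mk' (P.act X) (P.act_add_right X)) c

lemma aux_act_sub (X : V) (c d : C) : P.act X (c - d) = P.act X c - P.act X d :=
  map_sub (AddMonoidHom.mk' (P.act X) (P.act_add_right X)) c d

lemma aux_act_one (X : V) : P.act X 1 = 0 := by
  rw [← map_one (algebraMap ℝ C)]; exact P.act_algebraMap X 1

lemma aux_act_rsmul (X : V) (r : ℝ) (c : C) : P.act X (r • c) = r • P.act X c := by
  rw [Algebra.smul_def, P.act_mul, P.act_algebraMap, Algebra.smul_def]; ring

lemma aux_g_zero_left (Y : V) : P.g 0 Y = 0 :=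
  map_zero (AddMonoidHom.mk' (fun X => P.g X Y) (fun a b => P.g_add_left a b Y))

lemma aux_g_neg_left (X Y : V) : P.g (-X) Y = - P.g X Y :=
  map_neg (AddMonoidHom.mk' (fun X => P.g X Y) (fun a b => P.g_add_left a b Y)) X

lemma aux_g_sub_left (X X' Y : V) : P.g (X - X') Y = P.g X Y - P.g X' Y :=
  map_sub (AddMonoidHom.mk' (fun X => P.g X Y) (fun a b => P.g_add_left a b Y)) X X'

lemma aux_g_add_right (X Y Y' : V) : P.g X (Y + Y') = P.g X Y + P.g X Y' := by
  rw [P.g_symm, P.g_add_left, P.g_symm Y X, P.g_symm Y' X]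

lemma aux_g_zero_right (X : V) : P.g X 0 = 0 := by
  rw [P.g_symm, aux_g_zero_left]

lemma aux_g_neg_right (X Y : V) : P.g X (-Y) = - P.g X Y := by
  rw [P.g_symm, aux_g_neg_left, P.g_symm]

lemma aux_g_sub_right (X Y Y' : V) : P.g X (Y - Y') = P.g X Y - P.g X Y' := by
  rw [P.g_symm, aux_g_sub_left, P.g_symm Y X, P.g_symm Y' X]

lemma aux_g_smul_right (f : C) (X Y : V) : P.g X (f • Y) = f * P.g X Y := by
  rw [P.g_symm, P.g_smul_left, P.g_symm]

lemma aux_g_rsmul_left (r : ℝ) (X Y : V) : P.g (r • X) Y = r • P.g X Y := by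
  rw [aux_rsmul (C := C), P.g_smul_left, Algebra.smul_def]

lemma aux_bracket_zero_left (X : V) : P.bracket 0 X = 0 :=
  map_zero (AddMonoidHom.mk' (fun Y => P.bracket Y X) (fun a b => P.bracket_add_left a b X))

lemma aux_bracket_neg_left (X Y : V) : P.bracket (-X) Y = - P.bracket X Y :=
  map_neg (AddMonoidHom.mk' (fun Z => P.bracket Z Y) (fun a b => P.bracket_add_left a b Y)) X

lemma aux_bracket_neg_right (X Y : V) : P.bracket X (-Y) = - P.bracket X Y := by
  rw [P.bracket_antisymm, aux_bracket_neg_left, P.bracket_antisymm Y X]; abel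

lemma aux_bracket_add_right (X Y Z : V) : P.bracket X (Y + Z) = P.bracket X Y + P.bracket X Z := by
  rw [P.bracket_antisymm, P.bracket_add_left, P.bracket_antisymm Y X, P.bracket_antisymm Z X]; abel

lemma aux_bracket_sub_right (X Y Z : V) : P.bracket X (Y - Z) = P.bracket X Y - P.bracket X Z := by
  rw [sub_eq_add_neg, aux_bracket_add_right, aux_bracket_neg_right, sub_eq_add_neg]

lemma aux_bracket_self (X : V) : P.bracket X X = 0 := by
  apply aux_two_cancel_V
  rw [two_smul, smul_zero]
  nth_rewrite 1 [P.bracket_antisymm X X]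
  abel

lemma aux_bracket_zero_right (X : V) : P.bracket X 0 = 0 := by
  rw [P.bracket_antisymm, aux_bracket_zero_left, neg_zero]

lemma aux_bracket_jacobi (X Y Z : V) :
    P.bracket X (P.bracket Y Z)
      = P.bracket (P.bracket X Y) Z + P.bracket Y (P.bracket X Z) := by
  have j := P.jacobi X Y Z
  rw [P.bracket_antisymm Z X, aux_bracket_neg_right, P.bracket_antisymm Z (P.bracket X Y)] at j
  apply eq_of_sub_eq_zero
  rw [← j]; abel

/-! ### Metric / structure helpers -/

lemma aux_eta_g (X : V) : P.g X P.xi = P.eta X := by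
  have h := P.compatible X P.xi
  rw [P.phi_xi, aux_g_zero_right, P.eta_xi, mul_one] at h
  linear_combination h

lemma aux_eta_g' (X : V) : P.g P.xi X = P.eta X := by
  rw [P.g_symm]; exact aux_eta_g P X

lemma aux_nabla_eta (X W : V) :
    P.eta (P.nabla X W) = P.act X (P.eta W) - P.g W (P.nabla X P.xi) := by
  have hm := P.nabla_metric X W P.xi
  rw [aux_eta_g P W, aux_eta_g P (P.nabla X W)] at hm
  linear_combination -hm

lemma aux_eta_nabla_xi (X : V) : P.eta (P.nabla X P.xi) = 0 := by
  have h := aux_nabla_eta P X P.xi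
  rw [P.eta_xi, aux_act_one, P.g_symm P.xi (P.nabla X P.xi), aux_eta_g] at h
  apply aux_two_cancel (C := C)
  rw [mul_zero]
  linear_combination h

lemma aux_koszul (X Y Z : V) : (2 : C) * P.g (P.nabla X Y) Z =
    P.act X (P.g Y Z) + P.act Y (P.g X Z) - P.act Z (P.g X Y)
      + P.g (P.bracket X Y) Z - P.g (P.bracket X Z) Y - P.g (P.bracket Y Z) X := by
  have m1 := P.nabla_metric X Y Z
  have m2 := P.nabla_metric Y X Z
  have m3 := P.nabla_metric Z X Y
  have t1 : P.g (P.bracket X Y) Z = P.g (P.nabla X Y) Z - P.g (P.nabla Y X) Z := by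
    rw [← P.torsion_free, aux_g_sub_left]
  have t2 : P.g (P.bracket X Z) Y = P.g (P.nabla X Z) Y - P.g (P.nabla Z X) Y := by
    rw [← P.torsion_free, aux_g_sub_left]
  have t3 : P.g (P.bracket Y Z) X = P.g (P.nabla Y Z) X - P.g (P.nabla Z Y) X := by
    rw [← P.torsion_free, aux_g_sub_left]
  have s1 := P.g_symm Y (P.nabla X Z)
  have s2 := P.g_symm X (P.nabla Y Z)
  have s3 := P.g_symm X (P.nabla Z Y)
  linear_combination -m1 - m2 + m3 - t1 + t2 + t3 - s1 - s2 + s3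

/-! ### Paracontact helpers -/

lemma aux_two_dEta (X Y : V) : (2 : C) * P.toAlmostParacontact.dEta X Y
    = P.act X (P.eta Y) - P.act Y (P.eta X) - P.eta (P.bracket X Y) := by
  simp only [AlmostParacontact.dEta, AlmostParacontact.twoDEta]
  exact aux_half_smul _

lemma aux_two_g_phi (hP : P.IsParacontact) (X Y : V) : (2 : C) * P.g X (P.phi Y)
    = P.act X (P.eta Y) - P.act Y (P.eta X) - P.eta (P.bracket X Y) := by
  rw [hP X Y]; exact aux_two_dEta P X Y

lemma aux_g_phi_left (hP : P.IsParacontact) (X Y : V) :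
    P.g (P.phi X) Y = - P.g X (P.phi Y) := by
  apply aux_two_cancel (C := C)
  rw [P.g_symm (P.phi X) Y, mul_neg, aux_two_g_phi P hP, aux_two_g_phi P hP,
    P.bracket_antisymm Y X, aux_eta_neg]
  ring

lemma aux_k1 (hP : P.IsParacontact) (W : V) :
    P.act P.xi (P.eta W) = P.eta (P.bracket P.xi W) := by
  have h := aux_two_g_phi P hP P.xi W
  rw [aux_eta_g' P (P.phi W), P.eta_phi, mul_zero, P.eta_xi, aux_act_one] at h
  linear_combination -h

/-! ### The key identity `L_ξ (dη) = 0` and `∇_X ξ = φ(hX) − φX` -/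

lemma aux_lieq (hP : P.IsParacontact) (U Z : V) :
    P.act P.xi (P.toAlmostParacontact.twoDEta U Z)
      = P.toAlmostParacontact.twoDEta (P.bracket P.xi U) Z
        + P.toAlmostParacontact.twoDEta U (P.bracket P.xi Z) := by
  simp only [AlmostParacontact.twoDEta]
  rw [aux_act_sub, aux_act_sub]
  have b1 := P.bracket_act P.xi U (P.eta Z)
  have b2 := P.bracket_act P.xi Z (P.eta U)
  have k3 : P.act P.xi (P.eta (P.bracket U Z)) = P.eta (P.bracket P.xi (P.bracket U Z)) :=
    aux_k1 P hP _
  have cU : P.act Z (P.eta (P.bracket P.xi U)) = P.act Z (P.act P.xi (P.eta U)) :=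
    congrArg (P.act Z) (aux_k1 P hP U).symm
  have cZ : P.act U (P.eta (P.bracket P.xi Z)) = P.act U (P.act P.xi (P.eta Z)) :=
    congrArg (P.act U) (aux_k1 P hP Z).symm
  have ej : P.eta (P.bracket P.xi (P.bracket U Z))
      = P.eta (P.bracket (P.bracket P.xi U) Z) + P.eta (P.bracket U (P.bracket P.xi Z)) := by
    rw [aux_bracket_jacobi]; exact P.eta_add _ _
  linear_combination -b1 + b2 + cU - cZ - k3 - ej

lemma aux_lieq_dEta (hP : P.IsParacontact) (U Z : V) :
    P.act P.xi (P.toAlmostParacontact.dEta U Z)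
      = P.toAlmostParacontact.dEta (P.bracket P.xi U) Z
        + P.toAlmostParacontact.dEta U (P.bracket P.xi Z) := by
  simp only [AlmostParacontact.dEta]
  rw [aux_act_rsmul, aux_lieq P hP, smul_add]

lemma aux_lie_g (hP : P.IsParacontact) (U Z : V) :
    P.act P.xi (P.g (P.phi U) (P.phi Z))
      = P.g (P.bracket P.xi (P.phi U)) (P.phi Z)
        + P.g (P.phi U) (P.phi (P.bracket P.xi Z)) := by
  rw [hP (P.phi U) Z, aux_lieq_dEta P hP, ← hP (P.bracket P.xi (P.phi U)) Z,
    ← hP (P.phi U) (P.bracket P.xi Z)]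

lemma aux_nabla_xi (hP : P.IsParacontact) (X : V) :
    P.nabla X P.xi = P.phi (P.h X) - P.phi X := by
  have key : ∀ Z, P.g (P.nabla X P.xi - (P.phi (P.h X) - P.phi X)) Z = 0 := by
    intro Z
    rw [aux_g_sub_left, aux_g_sub_left]
    have hs : (2 : C) * P.g (P.nabla X P.xi) Z
        = (2 : C) * P.g (P.phi (P.h X)) Z - (2 : C) * P.g (P.phi X) Z := by
      have H1 := aux_koszul P X P.xi Z
      rw [aux_eta_g' P Z, aux_eta_g P X, P.bracket_antisymm X P.xi, aux_g_neg_left,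
        aux_eta_g P (P.bracket X Z)] at H1
      have H2 : (2 : C) * P.g (P.phi (P.h X)) Z
          = -(P.g (P.bracket P.xi (P.phi X)) (P.phi Z)) - P.g (P.bracket P.xi X) Z
            + P.eta (P.bracket P.xi X) * P.eta Z := by
        have e1 : P.phi (P.h X)
            = (2⁻¹ : ℝ) • P.phi (P.bracket P.xi (P.phi X) - P.phi (P.bracket P.xi X)) := by
          simp only [h, AlmostParacontact.N3]
          rw [aux_phi_rsmul]
        rw [e1, aux_g_rsmul_left, aux_half_smul, aux_phi_sub, P.phi_phi,
          aux_g_sub_left, aux_g_sub_left, P.g_smul_left, aux_eta_g' P Z,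
          aux_g_phi_left P hP]
        ring
      have H3 : (2 : C) * P.g (P.phi X) Z
          = -(P.act X (P.eta Z) - P.act Z (P.eta X) - P.eta (P.bracket X Z)) := by
        rw [aux_g_phi_left P hP, mul_neg, aux_two_g_phi P hP]
      have hg : P.g X Z = - P.g (P.phi X) (P.phi Z) + P.eta X * P.eta Z := by
        linear_combination P.compatible X Z
      have H4 : P.act P.xi (P.g X Z)
          = - P.act P.xi (P.g (P.phi X) (P.phi Z))
            + (P.eta X * P.eta (P.bracket P.xi Z) + P.eta Z * P.eta (P.bracket P.xi X)) := by
        rw [hg, P.act_add_right, aux_act_neg, P.act_mul, aux_k1 P hP, aux_k1 P hP]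
      have H5 := aux_lie_g P hP X Z
      have H6 := P.compatible X (P.bracket P.xi Z)
      have H7 := P.g_symm (P.bracket P.xi Z) X
      linear_combination H1 - H2 + H3 + H4 - H5 - H6 - H7
    apply aux_two_cancel (C := C)
    rw [mul_zero]
    linear_combination hs
  have h0 := P.g_nondeg _ key
  exact sub_eq_zero.mp h0

lemma aux_two_h (W : V) :
    (2 : ℝ) • P.h W = P.bracket P.xi (P.phi W) - P.phi (P.bracket P.xi W) := by
  simp only [h, AlmostParacontact.N3, smul_smul]
  norm_num

lemma aux_h_xi : P.h P.xi = 0 := by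
  simp only [h, AlmostParacontact.N3, P.phi_xi, aux_bracket_self P,
    aux_bracket_zero_right P, aux_phi_zero P]
  simp

lemma aux_h_phi (hP : P.IsParacontact) (X : V) : P.h (P.phi X) = - P.phi (P.h X) := by
  apply aux_two_cancel_V
  rw [aux_two_h P, smul_neg, ← aux_phi_rsmul P, aux_two_h P, P.phi_phi X,
    aux_bracket_sub_right P, P.bracket_smul_right, aux_bracket_self P, smul_zero, add_zero,
    aux_k1 P hP, aux_phi_sub P, P.phi_phi]
  module

lemma aux_nabla_xi_xi (hP : P.IsParacontact) : P.nabla P.xi P.xi = 0 := by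
  rw [aux_nabla_xi P hP, aux_h_xi, aux_phi_zero, P.phi_xi, sub_zero]

lemma aux_canTor_xi (hP : P.IsParacontact) (Z : V) :
    P.canTor P.xi Z = P.phi (P.h Z) := by
  simp only [canTor, can, P.phi_xi, P.eta_xi, aux_eta_nabla_xi P, aux_act_one P]
  rw [aux_nabla_eta P P.xi Z, aux_nabla_xi_xi P hP, aux_g_zero_right,
    ← P.torsion_free P.xi Z, aux_nabla_xi P hP Z]
  module

end AlmostParacontactMetric


/-- Properties of the canonical paracontact connection on a
paracontact metric manifold: it preserves `η`, `ξ`, `g`, the formula for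
`(∇̃_X φ)Y`, and the torsion identities. -/
theorem canonical_connection_properties
    {n : ℕ} {C V : Type*} [CommRing C] [Algebra ℝ C] [AddCommGroup V] [Module C V]
    [Module ℝ V] [IsScalarTower ℝ C V]
    (P : AlmostParacontactMetric n C V) (hP : P.IsParacontact) :
    (∀ X Y, P.act X (P.eta Y) - P.eta (P.can X Y) = 0) ∧
    (∀ X, P.can X P.xi = 0) ∧
    (∀ X Y Z, P.act X (P.g Y Z) = P.g (P.can X Y) Z + P.g Y (P.can X Z)) ∧
    (∀ X Y, P.can X (P.phi Y) - P.phi (P.can X Y) =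
        P.nablaPhi X Y + P.g (X - P.h X) Y • P.xi - P.eta Y • (X - P.h X)) ∧
    (∀ Y, P.canTor P.xi (P.phi Y) = - P.phi (P.canTor P.xi Y)) ∧
    (∀ X Y, P.eta X = 0 → P.eta Y = 0 →
        P.canTor X Y = ((2 : C) * P.toAlmostParacontact.dEta X Y) • P.xi) := by
  refine ⟨?_, ?_, ?_, ?_, ?_, ?_⟩
  · -- ∇̃ η = 0
    intro X Y
    simp only [AlmostParacontactMetric.can, P.eta_add, P.aux_eta_sub, P.eta_smul,
      P.eta_phi, P.aux_eta_nabla_xi, P.eta_xi]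
    ring
  · -- ∇̃ ξ = 0
    intro X
    simp only [AlmostParacontactMetric.can, P.phi_xi, P.eta_xi, P.aux_eta_nabla_xi,
      P.aux_act_one, smul_zero, one_smul, sub_self, zero_smul, add_zero]
  · -- ∇̃ g = 0
    intro X Y Z
    have m := P.nabla_metric X Y Z
    have p1 := P.aux_g_phi_left hP Y Z
    have n2 := P.aux_nabla_eta X Y
    have n3 := P.aux_nabla_eta X Z
    have s1 := P.g_symm (P.nabla X P.xi) Z
    simp only [AlmostParacontactMetric.can, P.g_add_left, P.aux_g_sub_left, P.g_smul_left,
      P.aux_g_add_right, P.aux_g_sub_right, P.aux_g_smul_right, P.aux_eta_g, P.aux_eta_g']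
    linear_combination m - P.eta X * p1 + P.eta Z * n2 + P.eta Y * n3 + P.eta Y * s1
  · -- ∇̃ φ
    intro X Y
    simp only [AlmostParacontactMetric.can, AlmostParacontactMetric.nablaPhi, P.eta_phi,
      P.aux_act_zero, P.phi_add, P.aux_phi_sub, P.phi_smul, P.phi_phi, P.phi_xi,
      smul_zero, zero_smul, add_zero, sub_zero, zero_sub]
    rw [P.aux_nabla_eta X (P.phi Y), P.eta_phi, P.aux_act_zero]
    rw [P.aux_nabla_xi hP X, P.aux_g_sub_right, P.compatible Y (P.h X), P.compatible Y X,
      P.aux_phi_sub, P.phi_phi (P.h X), P.phi_phi X, P.aux_g_sub_left,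
      P.g_symm Y (P.h X), P.g_symm Y X]
    module
  · -- T(ξ, φY) = −φ T(ξ, Y)
    intro Y
    rw [P.aux_canTor_xi hP (P.phi Y), P.aux_canTor_xi hP Y, P.aux_h_phi hP, P.aux_phi_neg]
  · -- torsion on D
    intro X Y hX hY
    simp only [AlmostParacontactMetric.canTor, AlmostParacontactMetric.can, hX, hY,
      zero_smul, smul_zero, zero_mul, P.aux_act_zero, sub_zero, add_zero, zero_sub]
    rw [P.aux_two_dEta X Y, ← P.torsion_free X Y, P.aux_eta_sub]
    simp only [hX, hY, P.aux_act_zero]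
    module
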